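/- arXiv:2211.15522 — 2 statements merged into one kernel-verified Lean document; each statement's English description precedes it below -/
import Mathlib

section
/- Let E be a finite-dimensional real inner product space, let ȳ ∈ E, r > 0, σ > 0, M₂ > 0, and let f : E → ℝ be twice continuously differentiable on the open ball B(ȳ, r). Assume |f(y)| ≤ σ for all y ∈ B(ȳ, r), the operator norm of the second Fréchet derivative of f satisfies ‖f''(y)‖ ≤ M₂ for all y ∈ B(ȳ, r), and 2·√(σ/M₂) < r. Then the gradient of f at ȳ satisfies ‖∇f(ȳ)‖ ≤ 2·√(σ·M₂). -/
/-!
Write `L = f'(ȳ)`. Taylor's formula gives `|f(ȳ ± u) - f(ȳ) ∓ L u| ≤ M₂ ‖u‖²`, so the central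
difference bounds `2 |L u| ≤ |f(ȳ + u)| + |f(ȳ - u)| + 2 M₂ ‖u‖²`, i.e. `|L u| ≤ σ + M₂ ‖u‖²`
whenever `ȳ ± u` lie in the ball. Hence `‖L‖ ≤ (σ + M₂ t²) / t` for every admissible radius `t`, and the choice
`t = √(σ / M₂)` (admissible since `2t < r`) minimises the right-hand side to `2 √(σ M₂)`.
-/

open Metric

section Taylor

variable {E F : Type*} [NormedAddCommGroup E] [NormedSpace ℝ E]
  [NormedAddCommGroup F] [NormedSpace ℝ F] {f : E → F} {s : Set E} {x a y : E} {C : ℝ}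

theorem norm_fderiv_fderiv_eq_norm_iteratedFDerivWithin_two (hs : IsOpen s) (hx : x ∈ s) :
    ‖fderiv ℝ (fderiv ℝ f) x‖ = ‖iteratedFDerivWithin ℝ 2 f s x‖ := by
  rw [iteratedFDerivWithin_of_isOpen 2 hs hx, ← norm_iteratedFDeriv_fderiv,
    norm_iteratedFDeriv_one]

theorem Convex.norm_image_sub_sub_fderiv_le_mul_sq (hs : Convex ℝ s) (hso : IsOpen s)
    (hf : ContDiffOn ℝ 2 f s) (hC : ∀ x ∈ s, ‖fderiv ℝ (fderiv ℝ f) x‖ ≤ C)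
    (ha : a ∈ s) (hy : y ∈ s) :
    ‖f y - f a - fderiv ℝ f a (y - a)‖ ≤ C * ‖y - a‖ ^ 2 := by
  have hdf : ∀ x ∈ s, DifferentiableAt ℝ f x := fun x hx =>
    (hf.contDiffAt (hso.mem_nhds hx)).differentiableAt two_ne_zero
  have hddf : ∀ x ∈ s, DifferentiableAt ℝ (fderiv ℝ f) x := fun x hx =>
    ((hf.fderiv_of_isOpen hso le_rfl).contDiffAt (hso.mem_nhds hx)).differentiableAt one_ne_zero
  have hseg : segment ℝ a y ⊆ s := hs.segment_subset ha hy
  have hC₀ : 0 ≤ C := (norm_nonneg (fderiv ℝ (fderiv ℝ f) a)).trans (hC a ha)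
  have hlip : ∀ x ∈ segment ℝ a y, ‖fderiv ℝ f x - fderiv ℝ f a‖ ≤ C * ‖y - a‖ := by
    intro x hx
    calc ‖fderiv ℝ f x - fderiv ℝ f a‖ ≤ C * ‖x - a‖ :=
          hs.norm_image_sub_le_of_norm_fderiv_le hddf hC ha (hseg hx)
      _ ≤ C * ‖y - a‖ := by
          have := dist_add_dist_of_mem_segment hx
          rw [dist_comm a x, dist_comm a y] at this
          simp only [← dist_eq_norm]
          gcongr
          linarith [dist_nonneg (x := x) (y := y)]
  calc ‖f y - f a - fderiv ℝ f a (y - a)‖ ≤ C * ‖y - a‖ * ‖y - a‖ :=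
        (convex_segment a y).norm_image_sub_le_of_norm_fderiv_le' (fun x hx => hdf x (hseg hx))
          hlip (left_mem_segment ℝ a y) (right_mem_segment ℝ a y)
    _ = C * ‖y - a‖ ^ 2 := by ring

end Taylor

section CentralDifference

variable {E : Type*} [NormedAddCommGroup E] [NormedSpace ℝ E] {f : E → ℝ} {s : Set E}
  {a u : E} {σ C : ℝ}

theorem Convex.abs_fderiv_apply_le (hs : Convex ℝ s) (hso : IsOpen s)
    (hf : ContDiffOn ℝ 2 f s) (hC : ∀ x ∈ s, ‖fderiv ℝ (fderiv ℝ f) x‖ ≤ C)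
    (hfσ : ∀ y ∈ s, |f y| ≤ σ) (ha : a ∈ s) (hp : a + u ∈ s) (hm : a - u ∈ s) :
    |fderiv ℝ f a u| ≤ σ + C * ‖u‖ ^ 2 := by
  have ep := hs.norm_image_sub_sub_fderiv_le_mul_sq hso hf hC ha hp
  have em := hs.norm_image_sub_sub_fderiv_le_mul_sq hso hf hC ha hm
  simp only [add_sub_cancel_left, sub_sub_cancel_left, map_neg, norm_neg, sub_neg_eq_add,
    Real.norm_eq_abs] at ep em
  have bp := abs_le.1 (hfσ _ hp)
  have bm := abs_le.1 (hfσ _ hm)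
  have rp := abs_le.1 ep
  have rm := abs_le.1 em
  exact abs_le.2 ⟨by linarith, by linarith⟩

end CentralDifference

theorem gradient_bound_of_small_on_ball_general
    {E : Type*} [NormedAddCommGroup E] [InnerProductSpace ℝ E] [FiniteDimensional ℝ E]
    (ybar : E) (r σ M₂ : ℝ) (hσ : 0 < σ) (hM₂ : 0 < M₂)
    (f : E → ℝ)
    (hf : ContDiffOn ℝ 2 f (ball ybar r))
    (hfσ : ∀ y ∈ ball ybar r, |f y| ≤ σ)
    (hf'' : ∀ y ∈ ball ybar r, ‖iteratedFDerivWithin ℝ 2 f (ball ybar r) y‖ ≤ M₂)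
    (hsmall : 2 * Real.sqrt (σ / M₂) < r) :
    ‖gradient f ybar‖ ≤ 2 * Real.sqrt (σ * M₂) := by
  set t := √(σ / M₂) with ht_def
  have ht : 0 < t := Real.sqrt_pos.2 (div_pos hσ hM₂)
  have hM₂t : M₂ * t ^ 2 = σ := by
    rw [Real.sq_sqrt (div_pos hσ hM₂).le]
    field_simp
  have hD2 : ∀ y ∈ ball ybar r, ‖fderiv ℝ (fderiv ℝ f) y‖ ≤ M₂ := fun y hy =>
    (norm_fderiv_fderiv_eq_norm_iteratedFDerivWithin_two isOpen_ball hy).trans_le (hf'' y hy)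
  have hL : ∀ u ∈ closedBall (0 : E) t, ‖fderiv ℝ f ybar u‖ ≤ 2 * σ := by
    intro u hu
    have hut : ‖u‖ ≤ t := mem_closedBall_zero_iff.1 hu
    have hur : ‖u‖ < r := by linarith
    calc ‖fderiv ℝ f ybar u‖ ≤ σ + M₂ * ‖u‖ ^ 2 :=
          (convex_ball ybar r).abs_fderiv_apply_le isOpen_ball hf hD2 hfσ
            (mem_ball_self (by linarith)) (by simpa using hur) (by simpa using hur)
      _ ≤ σ + M₂ * t ^ 2 := by gcongr
      _ = 2 * σ := by rw [hM₂t]; ring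
  calc ‖gradient f ybar‖ = ‖fderiv ℝ f ybar‖ := (InnerProductSpace.toDual ℝ E).symm.norm_map _
    _ ≤ 2 * σ / t := ContinuousLinearMap.opNorm_bound_of_ball_bound ht _ _ hL
    _ = 2 * √(σ * M₂) := by
      rw [ht_def, Real.sqrt_div hσ.le, Real.sqrt_mul hσ.le, div_div_eq_mul_div, mul_assoc,
        mul_div_assoc, mul_div_right_comm, Real.div_sqrt]

/-- Gradient estimate for a twice continuously differentiable function that is
small on a ball and has bounded second derivative: the gradient at the center
satisfies `‖∇f(ybar)‖ ≤ 2√(σ M₂)`. -/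
theorem gradient_bound_of_small_on_ball
    {E : Type*} [NormedAddCommGroup E] [InnerProductSpace ℝ E] [FiniteDimensional ℝ E]
    (ybar : E) (r σ M₂ : ℝ) (hr : 0 < r) (hσ : 0 < σ) (hM₂ : 0 < M₂)
    (f : E → ℝ)
    (hf : ContDiffOn ℝ 2 f (ball ybar r))
    (hfσ : ∀ y ∈ ball ybar r, |f y| ≤ σ)
    (hf'' : ∀ y ∈ ball ybar r, ‖iteratedFDerivWithin ℝ 2 f (ball ybar r) y‖ ≤ M₂)
    (hsmall : 2 * Real.sqrt (σ / M₂) < r) :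
    ‖gradient f ybar‖ ≤ 2 * Real.sqrt (σ * M₂) :=
  gradient_bound_of_small_on_ball_general ybar r σ M₂ hσ hM₂ f hf hfσ hf'' hsmall
end

section
/- Let E and F be finite-dimensional real inner product spaces with F = EuclideanSpace ℝ (Fin m), let ȳ ∈ E and r > 0. Let A : E → (F →L[ℝ] F) be differentiable at ȳ with A(ȳ) an invertible continuous linear map, and let b : E → F be twice continuously differentiable on the open ball B(ȳ, r) with component functions b_i := ⟨b(·), e_i⟩ with respect to the standard orthonormal basis (e_i) of F. Set σ := sup over y ∈ B(ȳ, r) of ‖b(y)‖ and suppose σ > 0 and M₂ > 0 are such that ‖b_i''(y)‖ ≤ M₂ for all y ∈ B(ȳ, r) and all i, and 4σ < M₂·r². Define P̄ := −(A(ȳ))⁻¹(b(ȳ)) and G(y) := A(y)(P̄) + b(y). Then G is differentiable at ȳ and ‖DG(ȳ)‖ ≤ ‖DA(ȳ)‖·‖(A(ȳ))⁻¹‖·σ + 2·√m·√(σ·M₂), where DG(ȳ) and DA(ȳ) are the Fréchet derivatives at ȳ and all norms are operator norms. -/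
/-!
Write `P̄ = -A(ȳ)⁻¹ b(ȳ)`. The derivative of `G` at `ȳ` is `h ↦ DA(ȳ)h P̄ + Db(ȳ)h`, and
`‖P̄‖ ≤ ‖A(ȳ)⁻¹‖ σ`, so everything rests on bounding `Db(ȳ)` componentwise. For a scalar function
`f` with `|f| ≤ σ` and `‖f''‖ ≤ M` near `ȳ`, the mean value inequality applied to
`f - Df(ȳ)` between `ȳ - ρe` and `ȳ + ρe` gives Landau's inequality `‖Df(ȳ)‖ ≤ σ/ρ + Mρ`,
and the choice `ρ = √(σ/M)`, admissible as soon as `σ < M r²`, turns it into `2√(σM)`.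
Summing the squares of the `m` component bounds produces the factor `√m`.
-/

open Metric

section Landau

variable {E F : Type*} [NormedAddCommGroup E] [NormedSpace ℝ E]
  [NormedAddCommGroup F] [NormedSpace ℝ F]

theorem norm_fderiv_sub_le_of_norm_iteratedFDerivWithin_two_le {f : E → F} {s : Set E} {M : ℝ}
    (hs : IsOpen s) (hs' : Convex ℝ s) (hf : ContDiffOn ℝ 2 f s)
    (hM : ∀ y ∈ s, ‖iteratedFDerivWithin ℝ 2 f s y‖ ≤ M) {x y : E} (hx : x ∈ s) (hy : y ∈ s) :
    ‖fderiv ℝ f y - fderiv ℝ f x‖ ≤ M * ‖y - x‖ := by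
  have hD2 : ∀ z ∈ s, ‖fderivWithin ℝ (fderivWithin ℝ f s) s z‖ ≤ M := fun z hz => by
    rw [← norm_iteratedFDerivWithin_one _ (hs.uniqueDiffOn z hz),
      norm_iteratedFDerivWithin_fderivWithin hs.uniqueDiffOn hz]
    exact hM z hz
  rw [← fderivWithin_of_isOpen hs hx, ← fderivWithin_of_isOpen hs hy]
  exact hs'.norm_image_sub_le_of_norm_fderivWithin_le
    ((hf.fderivWithin hs.uniqueDiffOn (by norm_num)).differentiableOn one_ne_zero) hD2 hx hy

theorem norm_fderiv_le_of_norm_le_of_norm_fderiv_sub_le {f : E → F} {x : E} {ρ σ L : ℝ}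
    (hρ : 0 < ρ) (hf : ∀ y ∈ closedBall x ρ, DifferentiableAt ℝ f y)
    (hσ : ∀ y ∈ closedBall x ρ, ‖f y‖ ≤ σ)
    (hL : ∀ y ∈ closedBall x ρ, ‖fderiv ℝ f y - fderiv ℝ f x‖ ≤ L * ρ) :
    ‖fderiv ℝ f x‖ ≤ σ / ρ + L * ρ := by
  have hx : x ∈ closedBall x ρ := mem_closedBall_self hρ.le
  have hσ0 : 0 ≤ σ := (norm_nonneg _).trans (hσ x hx)
  have hL0 : 0 ≤ L := nonneg_of_mul_nonneg_left ((norm_nonneg _).trans (hL x hx)) hρ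
  refine ContinuousLinearMap.opNorm_le_of_unit_norm (by positivity) fun e he => ?_
  have hh : ‖ρ • e‖ = ρ := by rw [norm_smul, he, Real.norm_of_nonneg hρ.le, mul_one]
  have hplus : x + ρ • e ∈ closedBall x ρ := by simp [hh]
  have hminus : x - ρ • e ∈ closedBall x ρ := by simp [hh]
  have hmv := (convex_closedBall x ρ).norm_image_sub_le_of_norm_fderiv_le' hf hL hminus hplus
  rw [show x + ρ • e - (x - ρ • e) = (2 * ρ) • e by module, map_smul, norm_smul,
    Real.norm_of_nonneg (by positivity), he, mul_one] at hmv
  have key : 2 * ρ * ‖fderiv ℝ f x e‖ ≤ 2 * σ + 2 * L * ρ ^ 2 := by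
    calc 2 * ρ * ‖fderiv ℝ f x e‖ = ‖(2 * ρ) • fderiv ℝ f x e‖ := by
          rw [norm_smul, Real.norm_of_nonneg (by positivity)]
      _ = ‖(f (x + ρ • e) - f (x - ρ • e))
            - (f (x + ρ • e) - f (x - ρ • e) - (2 * ρ) • fderiv ℝ f x e)‖ := by
          rw [sub_sub_cancel]
      _ ≤ ‖f (x + ρ • e) - f (x - ρ • e)‖
            + ‖f (x + ρ • e) - f (x - ρ • e) - (2 * ρ) • fderiv ℝ f x e‖ := norm_sub_le _ _
      _ ≤ σ + σ + L * ρ * (2 * ρ) := by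
          gcongr
          exact (norm_sub_le _ _).trans (add_le_add (hσ _ hplus) (hσ _ hminus))
      _ = 2 * σ + 2 * L * ρ ^ 2 := by ring
  rw [div_add' _ _ _ hρ.ne', le_div_iff₀ hρ]
  nlinarith

theorem norm_fderiv_le_two_sqrt_mul_of_contDiffOn_ball {f : E → F} {x : E} {r σ M : ℝ}
    (hr : 0 < r) (hσ : 0 < σ) (hM : 0 < M) (hsmall : σ < M * r ^ 2)
    (hf : ContDiffOn ℝ 2 f (ball x r)) (hfσ : ∀ y ∈ ball x r, ‖f y‖ ≤ σ)
    (hf'' : ∀ y ∈ ball x r, ‖iteratedFDerivWithin ℝ 2 f (ball x r) y‖ ≤ M) :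
    ‖fderiv ℝ f x‖ ≤ 2 * √(σ * M) := by
  set ρ := √σ / √M with hρ
  have hρpos : 0 < ρ := by positivity
  have hρr : ρ < r := by
    refine (pow_lt_pow_iff_left₀ hρpos.le hr.le two_ne_zero).1 ?_
    rw [hρ, div_pow, Real.sq_sqrt hσ.le, Real.sq_sqrt hM.le, div_lt_iff₀ hM]
    linarith
  have hsub : closedBall x ρ ⊆ ball x r := closedBall_subset_ball hρr
  have hx : x ∈ ball x r := mem_ball_self hr
  have hlandau := norm_fderiv_le_of_norm_le_of_norm_fderiv_sub_le hρpos
    (fun y hy => (hf.differentiableOn two_ne_zero y (hsub hy)).differentiableAt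
      (isOpen_ball.mem_nhds (hsub hy)))
    (fun y hy => hfσ y (hsub hy))
    (fun y hy => (norm_fderiv_sub_le_of_norm_iteratedFDerivWithin_two_le isOpen_ball
      (convex_ball x r) hf hf'' hx (hsub hy)).trans
        (by gcongr; simpa [dist_eq_norm] using hy))
  have hsqrtM : 0 < √M := by positivity
  calc ‖fderiv ℝ f x‖ ≤ σ / ρ + M * ρ := hlandau
    _ = √σ ^ 2 / (√σ / √M) + √M ^ 2 * (√σ / √M) := by
        rw [Real.sq_sqrt hσ.le, Real.sq_sqrt hM.le]
    _ = 2 * √(σ * M) := by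
        rw [Real.sqrt_mul hσ.le]
        field_simp
        ring

end Landau

theorem EuclideanSpace.opNorm_le_sqrt_card_mul {E ι : Type*} [NormedAddCommGroup E]
    [NormedSpace ℝ E] [Fintype ι] (T : E →L[ℝ] EuclideanSpace ℝ ι) {c : ℝ} (hc : 0 ≤ c)
    (h : ∀ i, ‖(EuclideanSpace.proj i).comp T‖ ≤ c) :
    ‖T‖ ≤ √(Fintype.card ι) * c := by
  refine T.opNorm_le_bound (by positivity) fun v => ?_
  have hcomp : ∀ i, ‖T v i‖ ≤ c * ‖v‖ := fun i =>
    ((EuclideanSpace.proj i).comp T).le_of_opNorm_le (h i) v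
  calc ‖T v‖ = √(∑ i, ‖T v i‖ ^ 2) := EuclideanSpace.norm_eq _
    _ ≤ √(∑ _i : ι, (c * ‖v‖) ^ 2) := by gcongr with i; exact hcomp i
    _ = √(Fintype.card ι) * c * ‖v‖ := by
        rw [Finset.sum_const, Finset.card_univ, nsmul_eq_mul, Real.sqrt_mul (by positivity),
          Real.sqrt_sq (by positivity), mul_assoc]

theorem fderiv_inner_single_right {E ι : Type*} [NormedAddCommGroup E] [NormedSpace ℝ E]
    [Fintype ι] [DecidableEq ι] {b : E → EuclideanSpace ℝ ι} {x : E}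
    (hb : DifferentiableAt ℝ b x) (i : ι) :
    fderiv ℝ (fun y => inner ℝ (b y) (EuclideanSpace.single i (1 : ℝ))) x =
      (EuclideanSpace.proj i).comp (fderiv ℝ b x) := by
  have : (fun y => inner ℝ (b y) (EuclideanSpace.single i (1 : ℝ))) =
      EuclideanSpace.proj i ∘ b := by
    funext y
    simp [EuclideanSpace.inner_single_right]
  rw [this, fderiv_comp x (EuclideanSpace.proj i).differentiableAt hb,
    ContinuousLinearMap.fderiv]

theorem norm_fderiv_clm_apply_const_le {E F G : Type*} [NormedAddCommGroup E] [NormedSpace ℝ E]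
    [NormedAddCommGroup F] [NormedSpace ℝ F] [NormedAddCommGroup G] [NormedSpace ℝ G]
    {A : E → F →L[ℝ] G} {x : E} (hA : DifferentiableAt ℝ A x) (v : F) :
    ‖fderiv ℝ (fun y => A y v) x‖ ≤ ‖fderiv ℝ A x‖ * ‖v‖ := by
  rw [fderiv_clm_apply hA (differentiableAt_const v), fderiv_const_apply,
    ContinuousLinearMap.comp_zero, zero_add, ← (fderiv ℝ A x).opNorm_flip]
  exact (fderiv ℝ A x).flip.le_opNorm v

-- In `ℝ`, `sSup` of a set unbounded above is `0`, so a positive supremum is a genuine one.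
theorem Real.le_sSup_image_of_sSup_pos {α : Type*} {g : α → ℝ} {s : Set α}
    (h : 0 < sSup (g '' s)) {y : α} (hy : y ∈ s) : g y ≤ sSup (g '' s) := by
  refine le_csSup ?_ (Set.mem_image_of_mem g hy)
  by_contra hbdd
  rw [Real.sSup_of_not_bddAbove hbdd] at h
  exact h.false

theorem jacobian_bound_covariance_constraint_general
    {E : Type*} [NormedAddCommGroup E] [InnerProductSpace ℝ E]
    {m : ℕ} (ybar : E) (r σ M₂ : ℝ) (hr : 0 < r) (hσpos : 0 < σ) (hM₂ : 0 < M₂)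
    (A : E → (EuclideanSpace ℝ (Fin m) →L[ℝ] EuclideanSpace ℝ (Fin m)))
    (hA : DifferentiableAt ℝ A ybar)
    (Ainv : EuclideanSpace ℝ (Fin m) →L[ℝ] EuclideanSpace ℝ (Fin m))
    (b : E → EuclideanSpace ℝ (Fin m))
    (hb : ContDiffOn ℝ 2 b (ball ybar r))
    (hσ : σ = sSup ((fun y => ‖b y‖) '' ball ybar r))
    (hb'' : ∀ y ∈ ball ybar r, ∀ i : Fin m,
      ‖iteratedFDerivWithin ℝ 2 (fun y' => inner ℝ (b y') (EuclideanSpace.single i (1 : ℝ)) : E → ℝ)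
        (ball ybar r) y‖ ≤ M₂)
    (hsmall : 4 * σ < M₂ * r ^ 2) :
    DifferentiableAt ℝ (fun y => A y (-(Ainv (b ybar))) + b y) ybar ∧
      ‖fderiv ℝ (fun y => A y (-(Ainv (b ybar))) + b y) ybar‖ ≤
        ‖fderiv ℝ A ybar‖ * ‖Ainv‖ * σ + 2 * Real.sqrt m * Real.sqrt (σ * M₂) := by
  have hybar : ybar ∈ ball ybar r := mem_ball_self hr
  have hbσ : ∀ y ∈ ball ybar r, ‖b y‖ ≤ σ := fun y hy =>
    hσ ▸ Real.le_sSup_image_of_sSup_pos (hσ ▸ hσpos) hy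
  have hbdiff : DifferentiableAt ℝ b ybar :=
    (hb.differentiableOn two_ne_zero ybar hybar).differentiableAt (isOpen_ball.mem_nhds hybar)
  have hcomp : ∀ i, ‖(EuclideanSpace.proj i).comp (fderiv ℝ b ybar)‖ ≤ 2 * √(σ * M₂) := by
    intro i
    rw [← fderiv_inner_single_right hbdiff]
    refine norm_fderiv_le_two_sqrt_mul_of_contDiffOn_ball hr hσpos hM₂ (by linarith)
      (hb.inner ℝ contDiffOn_const) (fun y hy => ?_) (fun y hy => hb'' y hy i)
    rw [Real.norm_eq_abs]
    calc _ ≤ ‖b y‖ * ‖EuclideanSpace.single i (1 : ℝ)‖ := abs_real_inner_le_norm _ _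
      _ ≤ σ := by simpa using hbσ y hy
  have hDb : ‖fderiv ℝ b ybar‖ ≤ √m * (2 * √(σ * M₂)) := by
    simpa using EuclideanSpace.opNorm_le_sqrt_card_mul _ (by positivity) hcomp
  set P := -(Ainv (b ybar))
  have hP : ‖P‖ ≤ ‖Ainv‖ * σ := by
    rw [norm_neg]
    exact Ainv.le_of_opNorm_le_of_le le_rfl (hbσ ybar hybar)
  have hAP : DifferentiableAt ℝ (fun y => A y P) ybar := hA.clm_apply (differentiableAt_const P)
  refine ⟨hAP.add hbdiff, ?_⟩
  calc ‖fderiv ℝ (fun y => A y P + b y) ybar‖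
      = ‖fderiv ℝ (fun y => A y P) ybar + fderiv ℝ b ybar‖ := by rw [fderiv_fun_add hAP hbdiff]
    _ ≤ ‖fderiv ℝ A ybar‖ * ‖P‖ + √m * (2 * √(σ * M₂)) :=
        (norm_add_le _ _).trans (add_le_add (norm_fderiv_clm_apply_const_le hA P) hDb)
    _ ≤ ‖fderiv ℝ A ybar‖ * (‖Ainv‖ * σ) + √m * (2 * √(σ * M₂)) := by gcongr
    _ = ‖fderiv ℝ A ybar‖ * ‖Ainv‖ * σ + 2 * √m * √(σ * M₂) := by ring

/-- Quantitative form of Lemma 2: at the fixed point `Pbar = -A(ybar)⁻¹ b(ybar)`,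
the Jacobian of the covariance-propagation constraint `G(y) = A(y) Pbar + b(y)`
is bounded by `‖DA(ybar)‖·‖A(ybar)⁻¹‖·σ + 2√m·√(σ·M₂)`. -/
theorem jacobian_bound_covariance_constraint
    {E : Type*} [NormedAddCommGroup E] [InnerProductSpace ℝ E] [FiniteDimensional ℝ E]
    {m : ℕ} (ybar : E) (r σ M₂ : ℝ) (hr : 0 < r) (hσpos : 0 < σ) (hM₂ : 0 < M₂)
    (A : E → (EuclideanSpace ℝ (Fin m) →L[ℝ] EuclideanSpace ℝ (Fin m)))
    (hA : DifferentiableAt ℝ A ybar)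
    (Ainv : EuclideanSpace ℝ (Fin m) →L[ℝ] EuclideanSpace ℝ (Fin m))
    (hAinv₁ : (A ybar).comp Ainv = ContinuousLinearMap.id ℝ (EuclideanSpace ℝ (Fin m)))
    (hAinv₂ : Ainv.comp (A ybar) = ContinuousLinearMap.id ℝ (EuclideanSpace ℝ (Fin m)))
    (b : E → EuclideanSpace ℝ (Fin m))
    (hb : ContDiffOn ℝ 2 b (ball ybar r))
    (hσ : σ = sSup ((fun y => ‖b y‖) '' ball ybar r))
    (hb'' : ∀ y ∈ ball ybar r, ∀ i : Fin m,
      ‖iteratedFDerivWithin ℝ 2 (fun y' => inner ℝ (b y') (EuclideanSpace.single i (1 : ℝ)) : E → ℝ)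
        (ball ybar r) y‖ ≤ M₂)
    (hsmall : 4 * σ < M₂ * r ^ 2) :
    DifferentiableAt ℝ (fun y => A y (-(Ainv (b ybar))) + b y) ybar ∧
      ‖fderiv ℝ (fun y => A y (-(Ainv (b ybar))) + b y) ybar‖ ≤
        ‖fderiv ℝ A ybar‖ * ‖Ainv‖ * σ + 2 * Real.sqrt m * Real.sqrt (σ * M₂) :=
  jacobian_bound_covariance_constraint_general ybar r σ M₂ hr hσpos hM₂ A hA Ainv b hb hσ hb''
    hsmall
end
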